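/- Let 𝒜 be an abelian category with enough projectives and let G be an object of 𝒜. If G is Gorenstein projective and also has finite projective dimension, then G is projective. Consequently, any totally acyclic complex of projectives whose syzygies all have finite projective dimension is split exact (contractible). -/
import Mathlib


/-!
STATEMENT 9: Let `𝒜` be an abelian category with enough projectives.  If an
object `G` is Gorenstein projective (a syzygy of a totally acyclic complex of
projectives) and has finite projective dimension, then `G` is projective.
Consequently, any totally acyclic complex of projectives all of whose syzygies
have finite projective dimension is split exact (contractible).
-/

open CategoryTheory Limits

universe v u

noncomputable section

variable {A : Type u} [Category.{v} A] [Abelian A]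

/-- A totally acyclic complex of projectives: an acyclic complex of projective
objects `P` such that `Hom(P, Q)` is acyclic for every projective `Q`. -/
def IsTotAcyclicProj (P : CochainComplex A ℤ) : Prop :=
  (∀ n : ℤ, Projective (P.X n)) ∧ (∀ n : ℤ, P.ExactAt n) ∧
    (∀ Q : A, Projective Q → ∀ (n : ℤ) (f : P.X n ⟶ Q),
      P.d (n - 1) n ≫ f = 0 → ∃ g : P.X (n + 1) ⟶ Q, P.d n (n + 1) ≫ g = f)

/-- Gorenstein projective objects: syzygies of totally acyclic complexes of
projectives. -/
def IsGorensteinProjective (G : A) : Prop :=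
  ∃ P : CochainComplex A ℤ, IsTotAcyclicProj P ∧
    Nonempty (G ≅ kernel (P.d 0 1))

/-- `G` has a projective resolution of finite length. -/
def HasFiniteProjDim (G : A) : Prop :=
  ∃ (n : ℕ) (F : ℕ → A) (d : ∀ k : ℕ, F (k + 1) ⟶ F k) (ε : F 0 ⟶ G),
    (∀ k, Projective (F k)) ∧ Epi ε ∧
    ∃ (w0 : d 0 ≫ ε = 0) (w : ∀ k, d (k + 1) ≫ d k = 0),
      (ShortComplex.mk (d 0) ε w0).Exact ∧
      (∀ k, (ShortComplex.mk (d (k + 1)) (d k) (w k)).Exact) ∧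
      (∀ k, n ≤ k → IsZero (F k))

/-! ### Auxiliary material -/

/-- `K` has projective dimension `< n` (resolution vanishing from degree `n` on). -/
def pdLE (n : ℕ) (K : A) : Prop :=
  ∃ (F : ℕ → A) (d : ∀ k : ℕ, F (k + 1) ⟶ F k) (ε : F 0 ⟶ K),
    (∀ k, Projective (F k)) ∧ Epi ε ∧
    ∃ (w0 : d 0 ≫ ε = 0) (w : ∀ k, d (k + 1) ≫ d k = 0),
      (ShortComplex.mk (d 0) ε w0).Exact ∧
      (∀ k, (ShortComplex.mk (d (k + 1)) (d k) (w k)).Exact) ∧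
      (∀ k, n ≤ k → IsZero (F k))

lemma hasFiniteProjDim_iff_pdLE (K : A) : HasFiniteProjDim K ↔ ∃ n, pdLE n K := Iff.rfl

lemma exact_comp_mono {X Y Z Z' : A} (f : X ⟶ Y) (g : Y ⟶ Z) (m : Z ⟶ Z') [Mono m]
    (w : f ≫ g = 0) (h : (ShortComplex.mk f g w).Exact) (w' : f ≫ (g ≫ m) = 0) :
    (ShortComplex.mk f (g ≫ m) w').Exact :=
  (ShortComplex.exact_iff_of_epi_of_isIso_of_mono
    (S₁ := ShortComplex.mk f g w) (S₂ := ShortComplex.mk f (g ≫ m) w')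
    { τ₁ := 𝟙 _, τ₂ := 𝟙 _, τ₃ := m, comm₁₂ := by simp, comm₂₃ := by simp }).1 h

lemma exact_of_comp_eq {X Y Z Z' : A} (f : X ⟶ Y) {g : Y ⟶ Z} {g' : Y ⟶ Z'} {m : Z' ⟶ Z}
    [Mono m] (hg : g = g' ≫ m) (w : f ≫ g = 0) (h : (ShortComplex.mk f g w).Exact)
    (w' : f ≫ g' = 0) : (ShortComplex.mk f g' w').Exact := by
  subst hg
  exact (ShortComplex.exact_iff_of_epi_of_isIso_of_mono
    (S₁ := ShortComplex.mk f g' w') (S₂ := ShortComplex.mk f (g' ≫ m) w)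
    { τ₁ := 𝟙 _, τ₂ := 𝟙 _, τ₃ := m, comm₁₂ := by simp, comm₂₃ := by simp }).2 h

lemma isZero_of_pdLE_zero {K : A} (h : pdLE 0 K) : IsZero K := by
  obtain ⟨F, d, ε, hF, hε, w0, w, hex0, hex, hz⟩ := h
  haveI := hε
  have h0 : IsZero (F 0) := hz 0 le_rfl
  rw [IsZero.iff_id_eq_zero, ← cancel_epi ε]
  rw [h0.eq_of_src ε 0]
  simp

lemma pdLE_succ {K : A} {N : ℕ} (h : pdLE (N + 1) K) :
    ∃ (F0 : A) (ε : F0 ⟶ K), Projective F0 ∧ Epi ε ∧ pdLE N (kernel ε) := by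
  obtain ⟨F, d, ε, hF, hε, w0, w, hex0, hex, hz⟩ := h
  refine ⟨F 0, ε, hF 0, hε, fun k => F (k + 1), fun k => d (k + 1),
    kernel.lift ε (d 0) w0, fun k => hF _, ?_, ?_, fun k => w (k + 1), ?_,
    fun k => hex (k + 1), fun k hk => hz (k + 1) (by omega)⟩
  · exact (ShortComplex.exact_iff_epi_kernel_lift _).1 hex0
  · rw [← cancel_mono (kernel.ι ε)]
    simp [w 0]
  · exact exact_of_comp_eq (d 1) (kernel.lift_ι ε (d 0) w0).symm (w 0) (hex 0) _

lemma ta_ext {P : CochainComplex A ℤ} (hP : IsTotAcyclicProj P) {Q : A} (hQ : Projective Q)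
    (i j : ℤ) (hij : j = i + 1) (f : P.X i ⟶ Q) (hf : P.d (i - 1) i ≫ f = 0) :
    ∃ g : P.X j ⟶ Q, P.d i j ≫ g = f := by
  subst hij; exact hP.2.2 Q hQ i f hf

lemma epi_lift {P : CochainComplex A ℤ} (hP : IsTotAcyclicProj P) (i j k : ℤ)
    (hij : j = i + 1) (hjk : k = j + 1) :
    Epi (kernel.lift (P.d j k) (P.d i j) (P.d_comp_d i j k)) := by
  have h := (HomologicalComplex.exactAt_iff' P i j k
    (by simp only [CochainComplex.prev]; omega)
    (by simp only [CochainComplex.next]; omega)).1 (hP.2.1 j)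
  exact (ShortComplex.exact_iff_epi_kernel_lift _).1 h

/-- Extension property: maps from a syzygy to a projective extend to the complex. -/
lemma star {P : CochainComplex A ℤ} (hP : IsTotAcyclicProj P) {Q : A} (hQ : Projective Q)
    (i j : ℤ) (hij : j = i + 1) (φ : kernel (P.d i j) ⟶ Q) :
    ∃ g : P.X i ⟶ Q, kernel.ι (P.d i j) ≫ g = φ := by
  set e := kernel.lift (P.d i j) (P.d (i - 1) i) (P.d_comp_d _ _ _) with he
  haveI : Epi e := epi_lift hP (i - 1) i j (by ring) hij
  have hde : P.d (i - 1 - 1) (i - 1) ≫ e = 0 := by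
    rw [← cancel_mono (kernel.ι (P.d i j))]
    simp [he]
  obtain ⟨g, hg⟩ := ta_ext hP hQ (i - 1) i (by ring) (e ≫ φ)
    (by rw [← Category.assoc, hde, zero_comp])
  refine ⟨g, ?_⟩
  have : e ≫ kernel.ι (P.d i j) ≫ g = e ≫ φ := by
    rw [← Category.assoc]
    rw [show e ≫ kernel.ι (P.d i j) = P.d (i - 1) i from kernel.lift_ι _ _ _, hg]
  exact (cancel_epi e).1 this

/-- The key factorization step.  `IH` is the inductive hypothesis (main lemma at level `N`). -/
lemma factor_lemma {P : CochainComplex A ℤ} (hP : IsTotAcyclicProj P) {N : ℕ}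
    (IH : ∀ (K : A), pdLE N K → ∀ (i j : ℤ), j = i + 1 →
      ∀ (φ : kernel (P.d i j) ⟶ K), ∃ g : P.X i ⟶ K, kernel.ι (P.d i j) ≫ g = φ)
    (i j : ℤ) (hij : j = i + 1) {K F0 : A} (ε : F0 ⟶ K) (hε : Epi ε)
    (hK1 : pdLE N (kernel ε)) (φ : kernel (P.d i j) ⟶ K) :
    ∃ g0 : kernel (P.d i j) ⟶ F0, g0 ≫ ε = φ := by
  haveI := hε
  haveI : Projective (P.X (i - 1)) := hP.1 _
  set e := kernel.lift (P.d i j) (P.d (i - 1) i) (P.d_comp_d _ _ _) with he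
  haveI : Epi e := epi_lift hP (i - 1) i j (by ring) hij
  set f0 := Projective.factorThru (e ≫ φ) ε with hf0def
  have hf0c : f0 ≫ ε = e ≫ φ := Projective.factorThru_comp _ _
  have hι'e : kernel.ι (P.d (i - 1) i) ≫ e = 0 := by
    rw [← cancel_mono (kernel.ι (P.d i j))]
    simp [he]
  have hθc : (kernel.ι (P.d (i - 1) i) ≫ f0) ≫ ε = 0 := by
    rw [Category.assoc, hf0c, ← Category.assoc, hι'e, zero_comp]
  obtain ⟨ψ, hψ⟩ := IH (kernel ε) hK1 (i - 1) i (by ring) (kernel.lift ε _ hθc)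
  set t := f0 - ψ ≫ kernel.ι ε with ht
  have hι't : kernel.ι (P.d (i - 1) i) ≫ t = 0 := by
    rw [ht, Preadditive.comp_sub, ← Category.assoc, hψ, kernel.lift_ι, sub_self]
  have hkd : kernel.ι e ≫ P.d (i - 1) i = 0 := by
    rw [show P.d (i - 1) i = e ≫ kernel.ι (P.d i j) from (kernel.lift_ι _ _ _).symm,
      ← Category.assoc, kernel.condition, zero_comp]
  have hket : kernel.ι e ≫ t = 0 := by
    rw [show kernel.ι e = kernel.lift (P.d (i - 1) i) (kernel.ι e) hkd ≫
      kernel.ι (P.d (i - 1) i) from (kernel.lift_ι _ _ _).symm, Category.assoc, hι't, comp_zero]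
  refine ⟨Abelian.epiDesc e t hket, ?_⟩
  rw [← cancel_epi e, ← Category.assoc, Abelian.comp_epiDesc, ht, Preadditive.sub_comp,
    Category.assoc, kernel.condition, comp_zero, sub_zero, hf0c]

/-- Main lemma: maps from syzygies to objects of finite projective dimension extend. -/
lemma main_lemma (N : ℕ) :
    ∀ (K : A), pdLE N K → ∀ (P : CochainComplex A ℤ), IsTotAcyclicProj P →
      ∀ (i j : ℤ), j = i + 1 → ∀ (φ : kernel (P.d i j) ⟶ K),
        ∃ g : P.X i ⟶ K, kernel.ι (P.d i j) ≫ g = φ := by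
  induction N with
  | zero =>
    intro K hK P hP i j hij φ
    have hKz := isZero_of_pdLE_zero hK
    exact ⟨0, by rw [comp_zero]; exact (hKz.eq_of_tgt _ _)⟩
  | succ N IHN =>
    intro K hK P hP i j hij φ
    obtain ⟨F0, ε, hF0, hε, hK1⟩ := pdLE_succ hK
    obtain ⟨g0, hg0⟩ := factor_lemma hP (fun K hK => IHN K hK P hP) i j hij ε hε hK1 φ
    obtain ⟨h1, hh1⟩ := star hP hF0 i j hij g0
    exact ⟨h1 ≫ ε, by rw [← Category.assoc, hh1, hg0]⟩

lemma projective_syz {P : CochainComplex A ℤ} (hP : IsTotAcyclicProj P)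
    (i j : ℤ) (hij : j = i + 1) (hfin : HasFiniteProjDim (kernel (P.d i j))) :
    Projective (kernel (P.d i j)) := by
  obtain ⟨N, hK⟩ := (hasFiniteProjDim_iff_pdLE _).1 hfin
  cases N with
  | zero =>
    have hz := isZero_of_pdLE_zero hK
    constructor
    intro E X f e he
    exact ⟨0, by rw [zero_comp, hz.eq_of_src f 0]⟩
  | succ N =>
    obtain ⟨F0, ε, hF0, hε, hK1⟩ := pdLE_succ hK
    haveI := hε
    obtain ⟨g0, hg0⟩ := factor_lemma hP
      (fun K hK i' j' hij' φ => main_lemma N K hK P hP i' j' hij' φ) i j hij ε hε hK1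
      (𝟙 (kernel (P.d i j)))
    constructor
    intro E X f e' he'
    haveI := he'
    haveI := hF0
    refine ⟨g0 ≫ Projective.factorThru (ε ≫ f) e', ?_⟩
    rw [Category.assoc, Projective.factorThru_comp, ← Category.assoc, hg0, Category.id_comp]

lemma hasFiniteProjDim_of_iso {G G' : A} (e : G ≅ G') (h : HasFiniteProjDim G) :
    HasFiniteProjDim G' := by
  obtain ⟨n, F, d, ε, h1, h2, w0, w, ex0, exs, hz⟩ := h
  haveI := h2
  refine ⟨n, F, d, ε ≫ e.hom, h1, epi_comp _ _,
    by rw [← Category.assoc, w0, zero_comp], w, ?_, exs, hz⟩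
  exact exact_comp_mono (d 0) ε e.hom w0 ex0 _

theorem stmt9 [EnoughProjectives A] :
    (∀ G : A, IsGorensteinProjective G → HasFiniteProjDim G → Projective G) ∧
    (∀ P : CochainComplex A ℤ, IsTotAcyclicProj P →
      (∀ n : ℤ, HasFiniteProjDim (kernel (P.d n (n + 1)))) →
      Nonempty (Homotopy (𝟙 P) 0)) := by
  constructor
  · intro G hG hfin
    obtain ⟨P, hP, ⟨iso⟩⟩ := hG
    have hfin' : HasFiniteProjDim (kernel (P.d 0 1)) := hasFiniteProjDim_of_iso iso hfin
    exact Projective.of_iso iso.symm (projective_syz hP 0 1 (by norm_num) hfin')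
  · intro P hP hfin
    have hσ : ∀ n : ℤ, Projective (kernel (P.d n (n + 1))) :=
      fun n => projective_syz hP n (n + 1) rfl (hfin n)
    set q : ∀ i j : ℤ, P.X i ⟶ kernel (P.d j (j + 1)) :=
      fun i j => kernel.lift (P.d j (j + 1)) (P.d i j) (P.d_comp_d _ _ _) with hqdef
    have hq : ∀ i j, q i j ≫ kernel.ι (P.d j (j + 1)) = P.d i j :=
      fun i j => kernel.lift_ι _ _ _
    have hqepi : ∀ n : ℤ, Epi (q n (n + 1)) := fun n => epi_lift hP n (n + 1) (n + 1 + 1) rfl rfl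
    have hs : ∀ n : ℤ, ∃ s : kernel (P.d (n + 1) (n + 1 + 1)) ⟶ P.X n, s ≫ q n (n + 1) = 𝟙 _ := by
      intro n
      haveI := hqepi n
      haveI := hσ (n + 1)
      exact ⟨Projective.factorThru (𝟙 _) (q n (n + 1)), Projective.factorThru_comp _ _⟩
    choose s hs using hs
    have hsd : ∀ n : ℤ, s n ≫ P.d n (n + 1) = kernel.ι (P.d (n + 1) (n + 1 + 1)) := by
      intro n
      rw [← hq n (n + 1), ← Category.assoc, hs n, Category.id_comp]
    have hdq : ∀ n : ℤ, P.d n (n + 1) ≫ q (n + 1) (n + 1 + 1) = 0 := by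
      intro n
      rw [← cancel_mono (kernel.ι (P.d (n + 1 + 1) (n + 1 + 1 + 1))), Category.assoc, hq,
        zero_comp]
      exact P.d_comp_d _ _ _
    have hr : ∀ n : ℤ, (𝟙 (P.X n) - q n (n + 1) ≫ s n) ≫ P.d n (n + 1) = 0 := by
      intro n
      rw [Preadditive.sub_comp, Category.id_comp, Category.assoc, hsd n, hq n (n + 1), sub_self]
    set r : ∀ n : ℤ, P.X n ⟶ kernel (P.d n (n + 1)) :=
      fun n => kernel.lift (P.d n (n + 1)) (𝟙 (P.X n) - q n (n + 1) ≫ s n) (hr n) with hrdef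
    have hrι : ∀ n : ℤ, r n ≫ kernel.ι (P.d n (n + 1)) = 𝟙 (P.X n) - q n (n + 1) ≫ s n :=
      fun n => kernel.lift_ι _ _ _
    have hdr : ∀ n : ℤ, P.d n (n + 1) ≫ r (n + 1) = q n (n + 1) := by
      intro n
      rw [← cancel_mono (kernel.ι (P.d (n + 1) (n + 1 + 1))), Category.assoc, hrι (n + 1),
        hq n (n + 1), Preadditive.comp_sub, Category.comp_id, ← Category.assoc, hdq n,
        zero_comp, sub_zero]
    set hom : ∀ i j : ℤ, P.X i ⟶ P.X j := fun i j =>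
      if h : i = j + 1 then eqToHom (congrArg P.X h) ≫ r (j + 1) ≫ s j else 0 with homdef
    have key : ∀ (a b : ℤ) (h : b = a + 1),
        (eqToHom (congrArg P.X h) ≫ r (a + 1) ≫ s a) ≫ P.d a b =
          𝟙 (P.X b) - P.d b (b + 1) ≫ r (b + 1) ≫ s b := by
      intro a b h
      subst h
      rw [eqToHom_refl, Category.id_comp, Category.assoc, hsd a, hrι (a + 1),
        ← Category.assoc (P.d (a + 1) (a + 1 + 1)), hdr (a + 1)]
    refine ⟨⟨hom, ?_, ?_⟩⟩
    · intro i j hrel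
      have : ¬ i = j + 1 := fun hh => hrel (by simpa [ComplexShape.up_Rel] using hh.symm)
      simp only [homdef]
      exact dif_neg this
    · intro n
      rw [dNext_eq hom (show (ComplexShape.up ℤ).Rel n (n + 1) by simp),
        prevD_eq hom (show (ComplexShape.up ℤ).Rel (n - 1) n by simp [ComplexShape.up_Rel])]
      have h2 : n = (n - 1) + 1 := by ring
      have e1 : hom (n + 1) n = eqToHom (congrArg P.X (rfl : (n + 1 : ℤ) = n + 1)) ≫
          r (n + 1) ≫ s n := dif_pos rfl
      have e2 : hom n (n - 1) = eqToHom (congrArg P.X h2) ≫ r ((n - 1) + 1) ≫ s (n - 1) :=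
        dif_pos h2
      rw [e1, e2, key (n - 1) n h2, eqToHom_refl, Category.id_comp]
      simp

end
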